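/- arXiv:2311.05901 — 4 statements merged into one kernel-verified Lean document; each statement's English description precedes it below -/
import Mathlib

section
/- For all Y, Z in 𝓗: (i) if Z is a proper subset of Y, then h(Z) ∈ F_Y, and hence h(Y) ≠ h(Z); (ii) if i ∈ Y and i ≠ 0, then i ∈ F_Y, and hence h(Y) ≠ i. -/
/-! `F_Y` contains the nonzero elements of `Y` and, for each nonzero `i ∈ Y`, both `h(Y − {i})`
and `F_{Y − {i}}`. Given `Z ⊂ Y` with `0 ∈ Z`, pick `i ∈ Y − Z`; then `i ≠ 0` and `Z ⊆ Y − {i}`,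
so either `Z = Y − {i}` or, by induction on `Y`, `h(Z) ∈ F_{Y − {i}} ⊆ F_Y`. The inequalities
follow because `h(Y)` is chosen outside `F_Y`. -/

/-- Auxiliary recursion: `stellG k Y` computes the pair `(F_Y, h(Y))` for a finite set
`Y` containing `0` with `k` nonzero elements.  `F_{{0}} = ∅`, `h({0}) = 1`; for
`Y = {0, i₁, ..., i_k}` with the `i_j` distinct and nonzero,
`F_Y = ((Y − {0}) ∪ {1}) ∪ Z₁ ∪ ⋯ ∪ Z_k` where `Z_j = F_{Y − {i_j}} ∪ {h(Y − {i_j})}`,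
and `h(Y) = min(ℕ⁺ − F_Y)`. -/
noncomputable def stellG : ℕ → Finset ℕ → Finset ℕ × ℕ
  | 0, _ => (∅, 1)
  | k + 1, Y =>
      let F : Finset ℕ :=
        ((Y.erase 0) ∪ {1}) ∪
          (Y.erase 0).biUnion fun i => (stellG k (Y.erase i)).1 ∪ {(stellG k (Y.erase i)).2}
      (F, sInf {m : ℕ | 0 < m ∧ m ∉ F})

/-- The set `F_Y`. -/
noncomputable def Fset (Y : Finset ℕ) : Finset ℕ := (stellG (Y.erase 0).card Y).1

/-- The value `h(Y) = min(ℕ⁺ − F_Y)`. -/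
noncomputable def hval (Y : Finset ℕ) : ℕ := (stellG (Y.erase 0).card Y).2

lemma card_erase_erase_zero {Y : Finset ℕ} {i m : ℕ} (hm : (Y.erase 0).card = m + 1)
    (hi : i ∈ Y.erase 0) : ((Y.erase i).erase 0).card = m := by
  rw [Finset.erase_right_comm, Finset.card_erase_of_mem hi, hm, Nat.add_sub_cancel]

lemma exists_card_erase_zero_eq_succ {Y : Finset ℕ} (h : (Y.erase 0).Nonempty) :
    ∃ m, (Y.erase 0).card = m + 1 :=
  ⟨_, (Nat.succ_pred_eq_of_pos (Finset.card_pos.mpr h)).symm⟩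

lemma Fset_eq_of_nonempty {Y : Finset ℕ} (h : (Y.erase 0).Nonempty) :
    Fset Y = ((Y.erase 0) ∪ {1}) ∪
      (Y.erase 0).biUnion (fun i => Fset (Y.erase i) ∪ {hval (Y.erase i)}) := by
  obtain ⟨m, hm⟩ := exists_card_erase_zero_eq_succ h
  rw [Fset, hm]
  simp only [stellG]
  congr 1
  refine Finset.biUnion_congr rfl fun i hi => ?_
  rw [Fset, hval, card_erase_erase_zero hm hi]

lemma hval_eq_sInf_of_nonempty {Y : Finset ℕ} (h : (Y.erase 0).Nonempty) :
    hval Y = sInf {m : ℕ | 0 < m ∧ m ∉ Fset Y} := by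
  obtain ⟨m, hm⟩ := exists_card_erase_zero_eq_succ h
  rw [hval, Fset, hm]
  simp only [stellG]

lemma hval_notMem_Fset (Y : Finset ℕ) : hval Y ∉ Fset Y := by
  rcases (Y.erase 0).eq_empty_or_nonempty with he | hne
  · simp [Fset, he, stellG]
  · rw [hval_eq_sInf_of_nonempty hne]
    have hnonempty : {m : ℕ | 0 < m ∧ m ∉ Fset Y}.Nonempty := by
      refine ⟨(Fset Y).sup id + 1, Nat.succ_pos _, fun hmem => ?_⟩
      have := Finset.le_sup (f := id) hmem
      simp only [id_eq] at this
      omega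
    exact (Nat.sInf_mem hnonempty).2

lemma hval_ne_of_mem_Fset {Y : Finset ℕ} {x : ℕ} (hx : x ∈ Fset Y) : hval Y ≠ x :=
  fun he => hval_notMem_Fset Y (he ▸ hx)

lemma mem_Fset_of_mem {Y : Finset ℕ} {i : ℕ} (hi : i ∈ Y) (h0 : i ≠ 0) : i ∈ Fset Y := by
  have hi' : i ∈ Y.erase 0 := Finset.mem_erase.mpr ⟨h0, hi⟩
  rw [Fset_eq_of_nonempty ⟨i, hi'⟩]
  exact Finset.mem_union_left _ (Finset.mem_union_left _ hi')

lemma Fset_erase_union_subset {Y : Finset ℕ} {i : ℕ} (hi : i ∈ Y) (h0 : i ≠ 0) :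
    Fset (Y.erase i) ∪ {hval (Y.erase i)} ⊆ Fset Y := by
  have hi' : i ∈ Y.erase 0 := Finset.mem_erase.mpr ⟨h0, hi⟩
  rw [Fset_eq_of_nonempty ⟨i, hi'⟩]
  exact (Finset.subset_biUnion_of_mem (fun j => Fset (Y.erase j) ∪ {hval (Y.erase j)}) hi').trans
    Finset.subset_union_right

lemma hval_mem_Fset_of_ssubset {Y Z : Finset ℕ} (hZ : 0 ∈ Z) (hZY : Z ⊂ Y) :
    hval Z ∈ Fset Y := by
  induction Y using Finset.strongInduction with
  | _ Y ih =>
    obtain ⟨i, hiY, hiZ⟩ := Finset.exists_of_ssubset hZY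
    have hi0 : i ≠ 0 := fun h => hiZ (h ▸ hZ)
    apply Fset_erase_union_subset hiY hi0
    rcases (Finset.subset_erase.mpr ⟨hZY.subset, hiZ⟩).eq_or_ssubset with rfl | hss
    · exact Finset.mem_union_right _ (Finset.mem_singleton_self _)
    · exact Finset.mem_union_left _ (ih _ (Finset.erase_ssubset hiY) hss)

theorem hval_Fset_properties_general (Y Z : Finset ℕ) (hZ : 0 ∈ Z) :
    (Z ⊂ Y → hval Z ∈ Fset Y ∧ hval Y ≠ hval Z) ∧
      (∀ i ∈ Y, i ≠ 0 → i ∈ Fset Y ∧ hval Y ≠ i) := by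
  refine ⟨fun hZY => ?_, fun i hi h0 => ?_⟩
  · have hmem := hval_mem_Fset_of_ssubset hZ hZY
    exact ⟨hmem, hval_ne_of_mem_Fset hmem⟩
  · have hmem := mem_Fset_of_mem hi h0
    exact ⟨hmem, hval_ne_of_mem_Fset hmem⟩

/-- Remark: (i) if `Z ⊂ Y` (both in `𝓗`), then `h(Z) ∈ F_Y`, hence `h(Y) ≠ h(Z)`;
(ii) if `i ∈ Y` and `i ≠ 0`, then `i ∈ F_Y`, hence `h(Y) ≠ i`. -/
theorem hval_Fset_properties (Y Z : Finset ℕ) (hY : 0 ∈ Y) (hZ : 0 ∈ Z) :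
    (Z ⊂ Y → hval Z ∈ Fset Y ∧ hval Y ≠ hval Z) ∧
      (∀ i ∈ Y, i ≠ 0 → i ∈ Fset Y ∧ hval Y ≠ i) :=
  hval_Fset_properties_general Y Z hZ
end

section
/- For every Y ∈ 𝓗 with |Y − {0}| = k, one has h(Y) ∉ F_Y, the set F_Y ∪ {h(Y)} consists of the elements of (Y − {0}) ∪ {1} together with at most k initial elements of ℕ⁺ − ((Y − {0}) ∪ {1}), and consequently h(Y) ≤ 2k + 1. -/
section InitialSegment

variable {α : Type*} [LinearOrder α]

def IsInitialIn (s : Set α) (I : Finset α) : Prop :=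
  ↑I ⊆ s ∧ ∀ x ∈ I, ∀ y ∈ s, y < x → y ∈ I

variable {s : Set α} {I J : Finset α}

theorem IsInitialIn.subset_of_le (hJ : IsInitialIn s J) (hI : ↑I ⊆ s) {m : α} (hm : m ∈ J)
    (hle : ∀ x ∈ I, x ≤ m) : I ⊆ J := by
  intro x hx
  rcases (hle x hx).lt_or_eq with hlt | rfl
  · exact hJ.2 m hm x (hI hx) hlt
  · exact hm

theorem IsInitialIn.sdiff [DecidableEq α] (hI : IsInitialIn s I) (B : Finset α) :
    IsInitialIn (s \ ↑B) (I \ B) := by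
  refine ⟨fun x hx => ?_, fun x hx y hy hyx => ?_⟩
  · rw [Finset.coe_sdiff] at hx
    exact Set.sdiff_subset_sdiff_left hI.1 hx
  · exact Finset.mem_sdiff.2 ⟨hI.2 x (Finset.mem_sdiff.1 hx).1 y hy.1 hyx, hy.2⟩

theorem IsInitialIn.insert [DecidableEq α] (hI : IsInitialIn s I) {a : α} (ha : a ∈ s)
    (hlt : ∀ y ∈ s, y < a → y ∈ I) : IsInitialIn s (insert a I) := by
  refine ⟨by simpa [Set.insert_subset_iff] using ⟨ha, hI.1⟩, fun x hx y hy hyx => ?_⟩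
  rcases Finset.mem_insert.1 hx with rfl | hx
  · exact Finset.mem_insert_of_mem (hlt y hy hyx)
  · exact Finset.mem_insert_of_mem (hI.2 x hx y hy hyx)

variable {ι : Type*} [DecidableEq α] {S : Finset ι} {t : ι → Finset α}

theorem isInitialIn_biUnion (h : ∀ i ∈ S, IsInitialIn s (t i)) : IsInitialIn s (S.biUnion t) := by
  refine ⟨fun x hx => ?_, fun x hx y hy hyx => ?_⟩
  · obtain ⟨i, hi, hxi⟩ := Finset.mem_biUnion.1 hx
    exact (h i hi).1 hxi
  · obtain ⟨i, hi, hxi⟩ := Finset.mem_biUnion.1 hx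
    exact Finset.mem_biUnion.2 ⟨i, hi, (h i hi).2 x hxi y hy hyx⟩

/-- Initial segments of a common set form a chain, so their union is the largest of them. -/
theorem card_biUnion_le_of_isInitialIn (h : ∀ i ∈ S, IsInitialIn s (t i)) {k : ℕ}
    (hk : ∀ i ∈ S, (t i).card ≤ k) : (S.biUnion t).card ≤ k := by
  rcases (S.biUnion t).eq_empty_or_nonempty with hempty | hne
  · simp [hempty]
  obtain ⟨i, hi, hmax⟩ := Finset.mem_biUnion.1 ((S.biUnion t).max'_mem hne)
  have hsub : S.biUnion t ⊆ t i :=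
    (h i hi).subset_of_le (isInitialIn_biUnion h).1 hmax fun x hx => (S.biUnion t).le_max' x hx
  exact (Finset.card_le_card hsub).trans (hk i hi)

end InitialSegment

/-- `ℕ⁺ − F`. -/
def posCompl (F : Finset ℕ) : Set ℕ := {m | 0 < m ∧ m ∉ F}

theorem sInf_posCompl_mem (F : Finset ℕ) : sInf (posCompl F) ∈ posCompl F := by
  obtain ⟨m, hm⟩ := Infinite.exists_notMem_finset (insert 0 F)
  rw [Finset.mem_insert, not_or] at hm
  exact Nat.sInf_mem ⟨m, Nat.pos_of_ne_zero hm.1, hm.2⟩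

theorem sInf_posCompl_le_card (F : Finset ℕ) :
    sInf (posCompl F) ≤ (F ∪ {sInf (posCompl F)}).card := by
  set h := sInf (posCompl F)
  have hsub : Finset.Icc 1 h ⊆ F ∪ {h} := by
    intro m hm
    rw [Finset.mem_Icc] at hm
    rcases hm.2.lt_or_eq with hlt | rfl
    · have hm' := Nat.notMem_of_lt_sInf hlt
      simp only [posCompl, Set.mem_ofPred_eq, not_and, not_not] at hm'
      exact Finset.mem_union_left _ (hm' hm.1)
    · exact Finset.mem_union_right _ (Finset.mem_singleton_self _)
  simpa using Finset.card_le_card hsub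

theorem stellG_snd (k : ℕ) (Y : Finset ℕ) : (stellG k Y).2 = sInf (posCompl (stellG k Y).1) := by
  cases k with
  | zero =>
    refine le_antisymm (sInf_posCompl_mem ∅).1 (Nat.sInf_le ?_)
    exact ⟨one_pos, Finset.notMem_empty 1⟩
  | succ k => rfl

theorem stellG_succ_fst (k : ℕ) (Y : Finset ℕ) :
    (stellG (k + 1) Y).1 = (Y.erase 0 ∪ {1}) ∪
      (Y.erase 0).biUnion fun i => (stellG k (Y.erase i)).1 ∪ {(stellG k (Y.erase i)).2} :=
  rfl

theorem posCompl_eq_diff {B C : Finset ℕ} (h : C ⊆ B) : posCompl B = posCompl C \ ↑B := by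
  ext m
  simp only [posCompl, Set.mem_sdiff, Set.mem_ofPred_eq, Finset.mem_coe]
  exact ⟨fun hm => ⟨⟨hm.1, fun hC => hm.2 (h hC)⟩, hm.2⟩, fun hm => ⟨hm.1.1, hm.2⟩⟩

theorem exists_isInitialIn_union_sInf {ι : Type*} {B F : Finset ℕ} {S : Finset ι}
    {Z : ι → Finset ℕ} {k : ℕ} (hF : F = B ∪ S.biUnion Z)
    (hZ : ∀ i ∈ S, IsInitialIn (posCompl B) (Z i \ B) ∧ (Z i \ B).card ≤ k) :
    ∃ I : Finset ℕ, I.card ≤ k + 1 ∧ IsInitialIn (posCompl B) I ∧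
      F ∪ {sInf (posCompl F)} = B ∪ I := by
  set h := sInf (posCompl F)
  have hBF : B ⊆ F := hF ▸ Finset.subset_union_left
  have hFB : F \ B = S.biUnion fun i => Z i \ B := by
    rw [hF, Finset.union_sdiff_left]
    ext m
    simp only [Finset.mem_sdiff, Finset.mem_biUnion]
    exact ⟨fun ⟨⟨i, hi, hm⟩, hB⟩ => ⟨i, hi, hm, hB⟩, fun ⟨i, hi, hm, hB⟩ => ⟨⟨i, hi, hm⟩, hB⟩⟩
  have hinit : IsInitialIn (posCompl B) (F \ B) :=
    hFB ▸ isInitialIn_biUnion fun i hi => (hZ i hi).1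
  have hh : h ∈ posCompl B :=
    ⟨(sInf_posCompl_mem F).1, fun hB => (sInf_posCompl_mem F).2 (hBF hB)⟩
  have hbelow : ∀ y ∈ posCompl B, y < h → y ∈ F \ B := by
    intro y hy hyh
    have hyF := Nat.notMem_of_lt_sInf hyh
    simp only [posCompl, Set.mem_ofPred_eq, not_and, not_not] at hyF
    exact Finset.mem_sdiff.2 ⟨hyF hy.1, hy.2⟩
  refine ⟨insert h (F \ B), ?_, hinit.insert hh hbelow, ?_⟩
  · calc (insert h (F \ B)).card ≤ (F \ B).card + 1 := Finset.card_insert_le _ _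
      _ ≤ k + 1 := by
        rw [hFB]
        gcongr
        exact card_biUnion_le_of_isInitialIn (fun i hi => (hZ i hi).1) fun i hi => (hZ i hi).2
  · rw [Finset.union_insert, Finset.union_sdiff_of_subset hBF, Finset.union_singleton]

theorem stellG_union_eq (k : ℕ) (Y : Finset ℕ) (hk : (Y.erase 0).card = k) :
    ∃ I : Finset ℕ, I.card ≤ k ∧ IsInitialIn (posCompl (Y.erase 0 ∪ {1})) I ∧
      (stellG k Y).1 ∪ {(stellG k Y).2} = (Y.erase 0 ∪ {1}) ∪ I := by
  induction k generalizing Y with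
  | zero =>
    refine ⟨∅, le_rfl, ⟨by simp, by simp⟩, ?_⟩
    simp [stellG, Finset.card_eq_zero.1 hk]
  | succ k ih =>
    rw [stellG_snd]
    refine exists_isInitialIn_union_sInf (stellG_succ_fst k Y) fun i hi => ?_
    have hchild : (Y.erase i).erase 0 = (Y.erase 0).erase i := Finset.erase_right_comm
    obtain ⟨I, hIk, hI, heq⟩ :=
      ih (Y.erase i) (by rw [hchild, Finset.card_erase_of_mem hi, hk, Nat.add_sub_cancel])
    have hsub : (Y.erase i).erase 0 ∪ {1} ⊆ Y.erase 0 ∪ {1} := by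
      rw [hchild]; exact Finset.union_subset_union_left (Finset.erase_subset _ _)
    rw [heq, Finset.union_sdiff_distrib, Finset.sdiff_eq_empty_iff_subset.2 hsub,
      Finset.empty_union, posCompl_eq_diff hsub]
    exact ⟨hI.sdiff _, (Finset.card_le_card Finset.sdiff_subset).trans hIk⟩

theorem hval_Fset_initial_segment_general (Y : Finset ℕ) :
    hval Y ∉ Fset Y ∧
      (∃ I : Finset ℕ,
        I.card ≤ (Y.erase 0).card ∧
        (∀ m ∈ I, 0 < m ∧ m ∉ Y.erase 0 ∪ {1}) ∧
        (∀ m ∈ I, ∀ m' : ℕ, 0 < m' → m' ∉ Y.erase 0 ∪ {1} → m' < m → m' ∈ I) ∧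
        Fset Y ∪ {hval Y} = (Y.erase 0 ∪ {1}) ∪ I) ∧
      hval Y ≤ 2 * (Y.erase 0).card + 1 := by
  have hh : hval Y = sInf (posCompl (Fset Y)) := stellG_snd _ _
  obtain ⟨I, hI, hinit, heq⟩ := stellG_union_eq _ Y rfl
  refine ⟨hh ▸ (sInf_posCompl_mem _).2, ⟨I, hI, fun m hm => hinit.1 hm,
    fun m hm m' hm' hB hlt => hinit.2 m hm m' ⟨hm', hB⟩ hlt, heq⟩, ?_⟩
  calc hval Y ≤ (Fset Y ∪ {hval Y}).card := hh ▸ sInf_posCompl_le_card _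
    _ = ((Y.erase 0 ∪ {1}) ∪ I).card := congrArg Finset.card heq
    _ ≤ (Y.erase 0).card + 1 + I.card :=
        (Finset.card_union_le _ _).trans (by gcongr; exact Finset.card_union_le _ _)
    _ ≤ 2 * (Y.erase 0).card + 1 := by omega

/-- Property (∗): for `Y ∈ 𝓗` with `k = |Y − {0}|` one has `h(Y) ∉ F_Y`; the set
`F_Y ∪ {h(Y)}` consists of the elements of `(Y − {0}) ∪ {1}` together with a set `I`
of at most `k` initial elements of `ℕ⁺ − ((Y − {0}) ∪ {1})`; and `h(Y) ≤ 2k + 1`. -/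
theorem hval_Fset_initial_segment (Y : Finset ℕ) (hY : 0 ∈ Y) :
    hval Y ∉ Fset Y ∧
      (∃ I : Finset ℕ,
        I.card ≤ (Y.erase 0).card ∧
        (∀ m ∈ I, 0 < m ∧ m ∉ Y.erase 0 ∪ {1}) ∧
        (∀ m ∈ I, ∀ m' : ℕ, 0 < m' → m' ∉ Y.erase 0 ∪ {1} → m' < m → m' ∈ I) ∧
        Fset Y ∪ {hval Y} = (Y.erase 0 ∪ {1}) ∪ I) ∧
      hval Y ≤ 2 * (Y.erase 0).card + 1 :=
  hval_Fset_initial_segment_general Y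
end

section
/- If A₁ and A₂ are two different members of 𝓑₁^M, then for arbitrary permutations π₁ and π₂ of [n]₀ we have A₁^{π₁} ≠ A₂^{π₂}. -/
/-- Membership in `𝓑₁`: `A` is a chain `S₀ ⊂ S₁ ⊂ ⋯ ⊂ S_l` of nonempty proper subsets
of `[n]₀ = {0,...,n}` with `|S_{j+1}| = |S_j| + 1` for all `j`. -/
def IsB1 (n : ℕ) (A : Finset (Finset ℕ)) : Prop :=
  ∃ (l : ℕ) (S : ℕ → Finset ℕ),
    A = (Finset.range (l + 1)).image S ∧
    (∀ j, j ≤ l → (S j).Nonempty ∧ S j ⊂ Finset.range (n + 1)) ∧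
    (∀ j, j < l → S j ⊂ S (j + 1) ∧ (S (j + 1)).card = (S j).card + 1)

/-- `π` is a permutation of `[n]₀` (a permutation of `ℕ` mapping `{0,...,n}` to itself). -/
def IsPermOn (n : ℕ) (π : Equiv.Perm ℕ) : Prop :=
  ∀ i, i < n + 1 → π i < n + 1

/-- `A^π = {π(S) : S ∈ A}`, the elementwise image of the chain `A` under `π`. -/
def permImage (π : Equiv.Perm ℕ) (A : Finset (Finset ℕ)) : Finset (Finset ℕ) :=
  A.image fun S => S.image π

/-- The maximal chain `M = {{n−1,…,0}, …, {n−1,n−2}, {n−1}}`, i.e. the sets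
`{j : m ≤ j ≤ n−1}` for `0 ≤ m ≤ n−1`. -/
def Mchain (n : ℕ) : Finset (Finset ℕ) :=
  (Finset.range n).image fun m => Finset.Icc m (n - 1)

/-- Membership in `𝓑₁^M = 𝓑₁ ∩ 𝒫(M)`. -/
def InB1M (n : ℕ) (A : Finset (Finset ℕ)) : Prop :=
  IsB1 n A ∧ A ⊆ Mchain n

/-!
Relabelling by a permutation preserves the cardinalities of the members of a chain, and a
subfamily of `M` is determined by the cardinalities of its members, since the members of `M`
have pairwise distinct cardinalities. Hence `A₁^{π₁} = A₂^{π₂}` forces `A₁ = A₂`.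
-/

open Finset

theorem image_card_permImage (π : Equiv.Perm ℕ) (A : Finset (Finset ℕ)) :
    (permImage π A).image card = A.image card := by
  rw [permImage, image_image]
  exact image_congr fun S _ => card_image_of_injective S π.injective

theorem injOn_card_Mchain (n : ℕ) : Set.InjOn card (Mchain n : Set (Finset ℕ)) := by
  simp only [Set.InjOn, Mchain, coe_image, Set.mem_image, mem_coe, mem_range]
  rintro _ ⟨m, hm, rfl⟩ _ ⟨m', hm', rfl⟩ hcard
  simp only [Nat.card_Icc] at hcard
  rw [show m = m' by omega]

theorem eq_of_image_card_eq_of_subset_Mchain {n : ℕ} {A₁ A₂ : Finset (Finset ℕ)}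
    (h₁ : A₁ ⊆ Mchain n) (h₂ : A₂ ⊆ Mchain n) (h : A₁.image card = A₂.image card) :
    A₁ = A₂ :=
  (image_eq_image_iff_of_injOn (injOn_card_Mchain n) h₁ h₂).mp h

theorem permImages_of_distinct_B1M_distinct_general (n : ℕ)
    (A₁ A₂ : Finset (Finset ℕ)) (h₁ : InB1M n A₁) (h₂ : InB1M n A₂) (h12 : A₁ ≠ A₂)
    (π₁ π₂ : Equiv.Perm ℕ) :
    permImage π₁ A₁ ≠ permImage π₂ A₂ := by
  intro h
  apply h12
  apply eq_of_image_card_eq_of_subset_Mchain h₁.2 h₂.2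
  rw [← image_card_permImage π₁ A₁, ← image_card_permImage π₂ A₂, h]

/-- Proposition: if `A₁ ≠ A₂` are members of `𝓑₁^M`, then for arbitrary permutations
`π₁, π₂` of `[n]₀` we have `A₁^{π₁} ≠ A₂^{π₂}`. -/
theorem permImages_of_distinct_B1M_distinct (n : ℕ) (hn : 1 ≤ n)
    (A₁ A₂ : Finset (Finset ℕ)) (h₁ : InB1M n A₁) (h₂ : InB1M n A₂) (h12 : A₁ ≠ A₂)
    (π₁ π₂ : Equiv.Perm ℕ) (hπ₁ : IsPermOn n π₁) (hπ₂ : IsPermOn n π₂) :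
    permImage π₁ A₁ ≠ permImage π₂ A₂ :=
  permImages_of_distinct_B1M_distinct_general n A₁ A₂ h₁ h₂ h12 π₁ π₂
end

section
/- Let f : 𝓑₁ → {1,...,m} be a function such that f(A) = f(A^π) for every A ∈ 𝓑₁ and every permutation π of [n]₀. If the restriction of f to 𝓑₁^M is proper, then f is proper. -/
/-- Membership in `C₁`: `A` is a chain (with respect to inclusion) of nonempty proper
subsets of `[n]₀`. -/
def IsChain1 (n : ℕ) (A : Finset (Finset ℕ)) : Prop :=
  (∀ S ∈ A, S.Nonempty ∧ S ⊂ Finset.range (n + 1)) ∧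
  ∀ S ∈ A, ∀ T ∈ A, S ⊆ T ∨ T ⊆ S

/-- `N ⊆ 𝓑₁` is a 1-nested set: the union of every family of at least two pairwise
incomparable members of `N` belongs to `C₁ − 𝓑₁`. -/
def IsNested1 (n : ℕ) (N : Set (Finset (Finset ℕ))) : Prop :=
  (∀ A ∈ N, IsB1 n A) ∧
  ∀ W : Finset (Finset (Finset ℕ)), ↑W ⊆ N → 2 ≤ W.card →
    (∀ A ∈ W, ∀ B ∈ W, A ≠ B → ¬ A ⊆ B) →
    IsChain1 n (W.sup id) ∧ ¬ IsB1 n (W.sup id)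

/-- A function `f` on `𝓔 ⊆ 𝓑₁` is proper when distinct members of `𝓔` of the same
colour never belong to a common 1-nested set. -/
def IsProperOn (n : ℕ) (E : Set (Finset (Finset ℕ))) (f : Finset (Finset ℕ) → ℕ) : Prop :=
  ∀ A ∈ E, ∀ B ∈ E, A ≠ B → f A = f B →
    ∀ N : Set (Finset (Finset ℕ)), IsNested1 n N → ¬ (A ∈ N ∧ B ∈ N)

/-!
If `A` and `B` lie in a common 1-nested set, then so does the pair `{A, B}`, hence `A ∪ B` is a
chain. Relabel `[n]₀` by ranking its elements by how many members of that chain contain them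
(ties broken by value): every member of the chain becomes an upper segment of ranks, and after
shifting ranks by one, a member of `M`. Relabelling preserves `𝓑₁`, `C₁`, inclusions and unions,
hence 1-nestedness, and by hypothesis it preserves `f`; so a same-coloured pair in a 1-nested set
would give one inside `𝓑₁^M`.
-/

open Finset

section Rank

variable {α β : Type*} [LinearOrder β]

def rankBy (κ : α → β) (R : Finset α) (x : α) : ℕ := #{y ∈ R | κ y < κ x}

variable {κ : α → β} {R : Finset α} {x y : α}

lemma rankBy_lt_rankBy (hy : y ∈ R) (h : κ y < κ x) : rankBy κ R y < rankBy κ R x := by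
  refine card_lt_card ((ssubset_iff_of_subset fun z hz => ?_).2 ⟨y, ?_, ?_⟩)
  · simp only [mem_filter] at hz ⊢
    exact ⟨hz.1, hz.2.trans h⟩
  · simp [hy, h]
  · simp

lemma rankBy_lt_card (hx : x ∈ R) : rankBy κ R x < #R :=
  card_lt_card (filter_ssubset.2 ⟨x, hx, lt_irrefl _⟩)

lemma injOn_rankBy (hκ : Set.InjOn κ R) : Set.InjOn (rankBy κ R) R := by
  intro x hx y hy hxy
  rcases lt_trichotomy (κ x) (κ y) with h | h | h
  · exact absurd hxy (rankBy_lt_rankBy hx h).ne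
  · exact hκ hx hy h
  · exact absurd hxy (rankBy_lt_rankBy hy h).ne'

lemma image_rankBy_of_forall_lt [DecidableEq α] {S : Finset α} (hS : S ⊆ R)
    (hκ : Set.InjOn κ R) (hup : ∀ x ∈ S, ∀ y ∈ R \ S, κ y < κ x) :
    S.image (rankBy κ R) = Ico (#R - #S) #R := by
  refine eq_of_subset_of_card_le (fun r hr => ?_) ?_
  · obtain ⟨x, hx, rfl⟩ := mem_image.1 hr
    have hlow : #(R \ S) ≤ rankBy κ R x :=
      card_le_card fun y hy => mem_filter.2 ⟨(mem_sdiff.1 hy).1, hup x hx y hy⟩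
    rw [card_sdiff_of_subset hS] at hlow
    exact mem_Ico.2 ⟨hlow, rankBy_lt_card (hS hx)⟩
  · rw [card_image_of_injOn ((injOn_rankBy hκ).mono (by simpa using hS)), Nat.card_Ico,
      Nat.sub_sub_self (card_le_card hS)]

end Rank

section Chain

variable {α : Type*} [LinearOrder α]

def chainDepth (C : Finset (Finset α)) (x : α) : ℕ := #{T ∈ C | x ∈ T}

def chainKey (C : Finset (Finset α)) (x : α) : ℕ ×ₗ α := toLex (chainDepth C x, x)

variable {C : Finset (Finset α)}

lemma chainKey_injective : Function.Injective (chainKey C) :=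
  fun _ _ h => congrArg Prod.snd h

lemma chainDepth_lt_chainDepth (hC : IsChain (· ⊆ ·) (C : Set (Finset α))) {S : Finset α}
    (hS : S ∈ C) {x y : α} (hx : x ∈ S) (hy : y ∉ S) : chainDepth C y < chainDepth C x := by
  refine card_lt_card ((ssubset_iff_of_subset fun T hT => ?_).2 ⟨S, ?_, ?_⟩)
  · obtain ⟨hTC, hyT⟩ := mem_filter.1 hT
    have hST : S ⊆ T := (hC.total hS hTC).resolve_right fun hTS => hy (hTS hyT)
    exact mem_filter.2 ⟨hTC, hST hx⟩
  · exact mem_filter.2 ⟨hS, hx⟩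
  · exact fun h => hy (mem_filter.1 h).2

lemma image_rankBy_chainKey (hC : IsChain (· ⊆ ·) (C : Set (Finset α))) {R S : Finset α}
    (hS : S ∈ C) (hSR : S ⊆ R) :
    S.image (rankBy (chainKey C) R) = Ico (#R - #S) #R :=
  image_rankBy_of_forall_lt hSR chainKey_injective.injOn fun _ hx _ hy =>
    Prod.Lex.toLex_lt_toLex.2 <| Or.inl <| chainDepth_lt_chainDepth hC hS hx (mem_sdiff.1 hy).2

end Chain

lemma IsChain1.isChain {n : ℕ} {C : Finset (Finset ℕ)} (hC : IsChain1 n C) :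
    IsChain (· ⊆ ·) (C : Set (Finset ℕ)) :=
  fun S hS T hT _ => hC.2 S hS T hT

lemma IsB1.isChain1 {n : ℕ} {A : Finset (Finset ℕ)} (hA : IsB1 n A) : IsChain1 n A := by
  obtain ⟨l, S, rfl, hprop, hstep⟩ := hA
  have hmono : Monotone fun j => S (min j l) := by
    refine monotone_nat_of_le_succ fun j => ?_
    rcases lt_or_ge j l with hj | hj
    · simpa [min_eq_left hj.le, min_eq_left (Nat.succ_le_of_lt hj)] using (hstep j hj).1.subset
    · simp [min_eq_right hj, min_eq_right (hj.trans j.le_succ)]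
  have hS : ∀ j ∈ range (l + 1), S j = S (min j l) := fun j hj => by
    rw [min_eq_left (Nat.lt_succ_iff.1 (mem_range.1 hj))]
  refine ⟨?_, ?_⟩
  · simp only [mem_image, mem_range]
    rintro _ ⟨j, hj, rfl⟩
    exact hprop j (Nat.lt_succ_iff.1 hj)
  · simp only [mem_image]
    rintro _ ⟨j, hj, rfl⟩ _ ⟨k, hk, rfl⟩
    rw [hS j hj, hS k hk]
    exact (le_total j k).imp (fun h => hmono h) fun h => hmono h

section Perm

variable {n : ℕ} {π : Equiv.Perm ℕ}

lemma IsPermOn.image_range (hπ : IsPermOn n π) : (range (n + 1)).image π = range (n + 1) :=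
  eq_of_subset_of_card_le (fun _ hy => by
      obtain ⟨x, hx, rfl⟩ := mem_image.1 hy
      exact mem_range.2 (hπ x (mem_range.1 hx)))
    (card_image_of_injective _ π.injective).ge

lemma IsPermOn.inv (hπ : IsPermOn n π) : IsPermOn n π⁻¹ := by
  intro j hj
  obtain ⟨x, hx, rfl⟩ := mem_image.1 (hπ.image_range.symm ▸ mem_range.2 hj)
  simpa using mem_range.1 hx

lemma IsPermOn.image_ssubset_range (hπ : IsPermOn n π) {S : Finset ℕ}
    (hS : S ⊂ range (n + 1)) : S.image π ⊂ range (n + 1) := by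
  rwa [← hπ.image_range, image_ssubset_image π.injective]

lemma permImage_inv_permImage (π : Equiv.Perm ℕ) (A : Finset (Finset ℕ)) :
    permImage π⁻¹ (permImage π A) = A := by
  simp [permImage, image_image, Function.comp_def]

lemma permImage_injective (π : Equiv.Perm ℕ) : Function.Injective (permImage π) :=
  Function.LeftInverse.injective (permImage_inv_permImage π)

lemma permImage_subset_permImage_iff {A B : Finset (Finset ℕ)} :
    permImage π A ⊆ permImage π B ↔ A ⊆ B :=
  image_subset_image_iff (image_injective π.injective)

lemma permImage_union (A B : Finset (Finset ℕ)) :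
    permImage π (A ∪ B) = permImage π A ∪ permImage π B :=
  image_union _ _

lemma IsB1.permImage (hπ : IsPermOn n π) {A : Finset (Finset ℕ)} (hA : IsB1 n A) :
    IsB1 n (permImage π A) := by
  obtain ⟨l, S, rfl, hprop, hstep⟩ := hA
  refine ⟨l, fun j => (S j).image π, by simp [_root_.permImage, image_image, Function.comp_def],
    fun j hj => ?_, fun j hj => ?_⟩
  · exact ⟨(hprop j hj).1.image _, hπ.image_ssubset_range (hprop j hj).2⟩
  · dsimp only
    rw [image_ssubset_image π.injective, card_image_of_injective _ π.injective,
      card_image_of_injective _ π.injective]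
    exact hstep j hj

lemma IsChain1.permImage (hπ : IsPermOn n π) {A : Finset (Finset ℕ)} (hA : IsChain1 n A) :
    IsChain1 n (permImage π A) := by
  refine ⟨?_, ?_⟩
  · simp only [_root_.permImage, mem_image]
    rintro _ ⟨S, hS, rfl⟩
    exact ⟨(hA.1 S hS).1.image _, hπ.image_ssubset_range (hA.1 S hS).2⟩
  · simp only [_root_.permImage, mem_image]
    rintro _ ⟨S, hS, rfl⟩ _ ⟨T, hT, rfl⟩
    exact (hA.2 S hS T hT).imp (image_subset_image ·) (image_subset_image ·)

lemma isB1_permImage_iff (hπ : IsPermOn n π) {A : Finset (Finset ℕ)} :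
    IsB1 n (permImage π A) ↔ IsB1 n A :=
  ⟨fun h => permImage_inv_permImage π A ▸ h.permImage hπ.inv, (·.permImage hπ)⟩

lemma isChain1_permImage_iff (hπ : IsPermOn n π) {A : Finset (Finset ℕ)} :
    IsChain1 n (permImage π A) ↔ IsChain1 n A :=
  ⟨fun h => permImage_inv_permImage π A ▸ h.permImage hπ.inv, (·.permImage hπ)⟩

end Perm

lemma exists_isPermOn_eqOn {n : ℕ} {p : ℕ → ℕ} (hp : ∀ x < n + 1, p x < n + 1)
    (hinj : Set.InjOn p (range (n + 1))) :
    ∃ π : Equiv.Perm ℕ, IsPermOn n π ∧ ∀ x ∈ range (n + 1), π x = p x := by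
  obtain ⟨π, hπ⟩ := Equiv.Perm.exists_extending_pair (fun x : range (n + 1) => x.1)
    (fun x => p x) Subtype.val_injective fun x y h => Subtype.ext (hinj x.2 y.2 h)
  refine ⟨π, fun x hx => ?_, fun x hx => hπ ⟨x, hx⟩⟩
  rw [hπ ⟨x, mem_range.2 hx⟩]
  exact hp x hx

lemma exists_perm_image_mem_Mchain {n : ℕ} {C : Finset (Finset ℕ)} (hC : IsChain1 n C) :
    ∃ π : Equiv.Perm ℕ, IsPermOn n π ∧ ∀ S ∈ C, S.image π ∈ Mchain n := by
  set r := rankBy (chainKey C) (range (n + 1))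
  have hr : ∀ x ∈ range (n + 1), r x < n + 1 := fun x hx => by simpa using rankBy_lt_card hx
  have hrinj : Set.InjOn r (range (n + 1)) := injOn_rankBy chainKey_injective.injOn
  -- The element of rank `0` lies in no member of `C`; it takes the slot `n`, which no member of
  -- `Mchain n` contains.
  set p : ℕ → ℕ := fun x => if r x = 0 then n else r x - 1
  have hp : ∀ x < n + 1, p x < n + 1 := fun x hx => by
    have := hr x (mem_range.2 hx)
    simp only [p]
    split_ifs <;> omega
  have hpinj : Set.InjOn p (range (n + 1)) := fun x hx y hy hxy => by
    have := hr x hx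
    have := hr y hy
    simp only [p] at hxy
    exact hrinj hx hy (by split_ifs at hxy <;> omega)
  obtain ⟨π, hπ, hπp⟩ := exists_isPermOn_eqOn hp hpinj
  refine ⟨π, hπ, fun S hS => ?_⟩
  obtain ⟨hSne, hSR⟩ := hC.1 S hS
  have hs := card_pos.2 hSne
  have hsn : #S < n + 1 := by simpa using card_lt_card hSR
  have hranks : S.image r = Ico (n + 1 - #S) (n + 1) := by
    simpa using image_rankBy_chainKey hC.isChain hS hSR.subset
  have hπS : S.image π = Icc (n - #S) (n - 1) := by
    calc S.image π = (S.image r).image (· - 1) := by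
          rw [image_image]
          refine image_congr fun x hx => ?_
          have := mem_image_of_mem r hx
          rw [hranks, mem_Ico] at this
          simp only [Function.comp, hπp x (hSR.subset hx), p]
          split_ifs <;> omega
      _ = Icc (n - #S) (n - 1) := by
          rw [hranks, Nat.image_sub_const_Ico (by omega)]
          ext
          simp only [mem_Ico, mem_Icc]
          omega
  rw [hπS]
  exact mem_image.2 ⟨n - #S, mem_range.2 (by omega), rfl⟩

section Nested

variable {n : ℕ} {A B : Finset (Finset ℕ)}

lemma IsNested1.mono {N N' : Set (Finset (Finset ℕ))} (h : IsNested1 n N) (hN' : N' ⊆ N) :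
    IsNested1 n N' :=
  ⟨fun A hA => h.1 A (hN' hA), fun W hW => h.2 W (hW.trans hN')⟩

lemma isNested1_pair_iff : IsNested1 n {A, B} ↔ IsB1 n A ∧ IsB1 n B ∧
    (¬A ⊆ B → ¬B ⊆ A → IsChain1 n (A ∪ B) ∧ ¬IsB1 n (A ∪ B)) := by
  have hsup : ({A, B} : Finset (Finset (Finset ℕ))).sup id = A ∪ B := by simp
  constructor
  · rintro ⟨hB1, hW⟩
    refine ⟨hB1 A (by simp), hB1 B (by simp), fun hAB hBA => ?_⟩
    have hne : A ≠ B := fun h => hAB h.subset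
    rw [← hsup]
    refine hW {A, B} (by simp) (card_pair hne).ge ?_
    simp only [mem_insert, mem_singleton]
    rintro X (rfl | rfl) Y (rfl | rfl) hXY <;> first | exact absurd rfl hXY | assumption
  · rintro ⟨hA, hB, hAB⟩
    refine ⟨by simp [hA, hB], fun W hW hcard hinc => ?_⟩
    have hWsub : W ⊆ {A, B} := fun X hX => by simpa using hW hX
    have hWeq : W = {A, B} := eq_of_subset_of_card_le hWsub (card_le_two.trans hcard)
    subst hWeq
    have hne : A ≠ B := fun h => by simp [h] at hcard
    rw [hsup]
    exact hAB (hinc A (by simp) B (by simp) hne) (hinc B (by simp) A (by simp) hne.symm)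

lemma IsNested1.isChain1_union (h : IsNested1 n {A, B}) : IsChain1 n (A ∪ B) := by
  obtain ⟨hA, hB, hAB⟩ := isNested1_pair_iff.1 h
  by_cases h₁ : A ⊆ B
  · rw [union_eq_right.2 h₁]; exact hB.isChain1
  by_cases h₂ : B ⊆ A
  · rw [union_eq_left.2 h₂]; exact hA.isChain1
  exact (hAB h₁ h₂).1

lemma IsNested1.permImage_pair {π : Equiv.Perm ℕ} (hπ : IsPermOn n π) (h : IsNested1 n {A, B}) :
    IsNested1 n {permImage π A, permImage π B} := by
  rw [isNested1_pair_iff] at h ⊢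
  simpa only [isB1_permImage_iff hπ, isChain1_permImage_iff hπ, ← permImage_union,
    permImage_subset_permImage_iff] using h

end Nested

theorem proper_of_proper_on_B1M_general (n : ℕ) (f : Finset (Finset ℕ) → ℕ)
    (hsym : ∀ A, IsB1 n A → ∀ π : Equiv.Perm ℕ, IsPermOn n π → f A = f (permImage π A))
    (hM : IsProperOn n {A | InB1M n A} f) :
    IsProperOn n {A | IsB1 n A} f := by
  intro A hA B hB hAB hf N hN ⟨hAN, hBN⟩
  have hpair : IsNested1 n {A, B} := hN.mono (Set.pair_subset hAN hBN)
  obtain ⟨π, hπ, hπM⟩ := exists_perm_image_mem_Mchain hpair.isChain1_union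
  have hA' : InB1M n (permImage π A) :=
    ⟨IsB1.permImage hπ hA, image_subset_iff.2 fun S hS => hπM S (mem_union_left B hS)⟩
  have hB' : InB1M n (permImage π B) :=
    ⟨IsB1.permImage hπ hB, image_subset_iff.2 fun S hS => hπM S (mem_union_right A hS)⟩
  exact hM _ hA' _ hB' ((permImage_injective π).ne hAB)
    (by rw [← hsym A hA π hπ, ← hsym B hB π hπ, hf]) _ (hpair.permImage_pair hπ) (by simp)

/-- Proposition (localisation): if `f : 𝓑₁ → {1,...,m}` satisfies `f(A) = f(A^π)` for
every `A ∈ 𝓑₁` and every permutation `π` of `[n]₀`, and the restriction of `f` to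
`𝓑₁^M` is proper, then `f` is proper. -/
theorem proper_of_proper_on_B1M (n m : ℕ) (hn : 1 ≤ n) (f : Finset (Finset ℕ) → ℕ)
    (hcod : ∀ A, IsB1 n A → f A ∈ Finset.Icc 1 m)
    (hsym : ∀ A, IsB1 n A → ∀ π : Equiv.Perm ℕ, IsPermOn n π → f A = f (permImage π A))
    (hM : IsProperOn n {A | InB1M n A} f) :
    IsProperOn n {A | IsB1 n A} f :=
  proper_of_proper_on_B1M_general n f hsym hM
end
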